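/- Let n = 2k+1 with k ≥ 2 (so n ≥ 5 odd), let A be the Cartan matrix of type C_n, and let σ be any permutation of {1,…,n}. If α and β are positive roots of type C_n (written in simple-root coordinates, viewed as integer vectors in ℤⁿ) satisfying B_σ·α = B_σ·β, then α = β. -/

import Mathlib

open Matrix

/-- The Cartan matrix of type `Cₙ` (nodes indexed `0, …, n-1`; the long root is the last
node): `a i i = 2`, consecutive nodes give `-1`, except `a (n-1) (n-2) = -2`. -/
def cartanC (n : ℕ) : Matrix (Fin n) (Fin n) ℤ :=
  fun i j => if i = j then 2
    else if i.val + 1 = j.val then -1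
    else if j.val + 1 = i.val then (if i.val = n - 1 then -2 else -1) else 0

/-- The acyclic exchange matrix `B_σ` attached to a Cartan matrix `A` and a permutation `σ`:
`b i i = 0`, `b i j = -a i j` if `σ i < σ j`, and `b i j = a i j` if `σ i > σ j`. -/
def Bmat {n : ℕ} (A : Matrix (Fin n) (Fin n) ℤ) (σ : Equiv.Perm (Fin n)) :
    Matrix (Fin n) (Fin n) ℤ :=
  fun i j => if i = j then 0 else if σ i < σ j then -A i j else A i j

/-- The positive roots of type `Cₙ` in simple-root coordinates (nodes `0`-indexed):
either `1` on an interval `[a, b]` and `0` elsewhere, or `1` on `[a, b-1]`, `2` on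
`[b, n-2]`, `1` at `n-1` and `0` elsewhere (with `a ≤ b ≤ n-2`). -/
def IsPosRootC (n : ℕ) (v : Fin n → ℤ) : Prop :=
  (∃ a b : ℕ, a ≤ b ∧ b < n ∧
    v = fun i => if a ≤ i.val ∧ i.val ≤ b then 1 else 0) ∨
  (∃ a b : ℕ, a ≤ b ∧ b ≤ n - 2 ∧
    v = fun i => if i.val = n - 1 then 1
      else if b ≤ i.val then 2 else if a ≤ i.val then 1 else 0)

/-!
Put `w = α - β`, so that `B_σ w = 0`. Row `0` of `B_σ` has a single nonzero entry `±1`, in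
column `1`, and for `0 < i < n - 1` row `i` has exactly two nonzero entries, both `±1`, in columns
`i - 1` and `i + 1`. Hence `w 1 = 0` and `|w (i + 1)| = |w (i - 1)|`, so `w` vanishes at odd
nodes and has constant absolute value on even ones: `w = 0` as soon as it vanishes at one even
node. Since `n = 2k + 1`, the nodes `n - 2` and `n - 1` are odd and even. Two roots of the
second kind agree (with value `1`) at `n - 1`; a root of each kind differ at `n - 2` (values
`2` and at most `1`); two intervals agreeing at `1` and `3` must agree at one of `0, 2, 4`.
-/

section Bmat

variable {n : ℕ} (A : Matrix (Fin n) (Fin n) ℤ) (σ : Equiv.Perm (Fin n))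

lemma abs_Bmat_apply_of_ne {i j : Fin n} (hij : i ≠ j) : |Bmat A σ i j| = |A i j| := by
  unfold Bmat
  rw [if_neg hij]
  split_ifs <;> simp

lemma Bmat_cartanC_apply_of_not_adjacent {i j : Fin n} (hij : i.val + 1 ≠ j.val)
    (hji : j.val + 1 ≠ i.val) : Bmat (cartanC n) σ i j = 0 := by
  unfold Bmat cartanC
  split_ifs <;> omega

end Bmat

section cartanC

variable {n : ℕ} {i j : Fin n}

lemma cartanC_apply_of_succ_eq (h : i.val + 1 = j.val) : cartanC n i j = -1 := by
  unfold cartanC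
  rw [if_neg (by rintro rfl; omega), if_pos h]

lemma cartanC_apply_of_eq_succ (h : j.val + 1 = i.val) (hi : i.val ≠ n - 1) :
    cartanC n i j = -1 := by
  unfold cartanC
  rw [if_neg (by rintro rfl; omega), if_neg (by omega), if_pos h, if_neg hi]

end cartanC

namespace BmatCartanCKernel

variable {n : ℕ} {σ : Equiv.Perm (Fin n)} {w : Fin n → ℤ}

lemma apply_eq_zero_of_val_eq_one (hw : Bmat (cartanC n) σ *ᵥ w = 0) (j : Fin n)
    (hj : j.val = 1) : w j = 0 := by
  have row := congrFun hw ⟨0, by omega⟩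
  rw [mulVec, dotProduct, Fintype.sum_eq_single j fun l hl => ?_] at row
  · have hB : |Bmat (cartanC n) σ ⟨0, by omega⟩ j| = 1 := by
      rw [abs_Bmat_apply_of_ne _ _ (by simp [Fin.ext_iff]; omega),
        cartanC_apply_of_succ_eq (by simp [hj])]
      rfl
    simpa [abs_ne_zero.mp (hB.trans_ne one_ne_zero)] using row
  · rw [Bmat_cartanC_apply_of_not_adjacent _ (by simp; omega) (by simp), zero_mul]

lemma abs_apply_eq_of_val_add_two (hw : Bmat (cartanC n) σ *ᵥ w = 0) (i j : Fin n)
    (hij : i.val + 2 = j.val) : |w j| = |w i| := by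
  have row := congrFun hw ⟨i.val + 1, by omega⟩
  rw [mulVec, dotProduct, Fintype.sum_eq_add i j (by simp [Fin.ext_iff]; omega)
    fun l hl => ?_] at row
  · have hBi : |Bmat (cartanC n) σ ⟨i.val + 1, by omega⟩ i| = 1 := by
      rw [abs_Bmat_apply_of_ne _ _ (by simp [Fin.ext_iff]),
        cartanC_apply_of_eq_succ rfl (by simp; omega)]
      rfl
    have hBj : |Bmat (cartanC n) σ ⟨i.val + 1, by omega⟩ j| = 1 := by
      rw [abs_Bmat_apply_of_ne _ _ (by simp [Fin.ext_iff]; omega),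
        cartanC_apply_of_succ_eq (by simp; omega)]
      rfl
    have := congrArg abs (eq_neg_of_add_eq_zero_right row)
    rwa [abs_neg, abs_mul, abs_mul, hBi, hBj, one_mul, one_mul] at this
  · obtain ⟨hli, hlj⟩ := hl
    rw [Bmat_cartanC_apply_of_not_adjacent _
      (by simp [Fin.ext_iff] at hlj ⊢; omega) (by simp [Fin.ext_iff] at hli ⊢; omega), zero_mul]

lemma apply_eq_zero_of_odd (hw : Bmat (cartanC n) σ *ᵥ w = 0) (j : Fin n) (hj : Odd j.val) :
    w j = 0 := by
  obtain ⟨m, hm⟩ := hj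
  induction m generalizing j with
  | zero => exact apply_eq_zero_of_val_eq_one hw j hm
  | succ m ih =>
    rw [← abs_eq_zero, abs_apply_eq_of_val_add_two hw ⟨2 * m + 1, by omega⟩ j (by simp; omega),
      abs_eq_zero]
    exact ih _ rfl

lemma abs_apply_eq_of_even (hw : Bmat (cartanC n) σ *ᵥ w = 0) (j : Fin n) (hj : Even j.val) :
    |w j| = |w ⟨0, Nat.zero_lt_of_lt j.isLt⟩| := by
  obtain ⟨m, hm⟩ := hj
  induction m generalizing j with
  | zero => congr; exact Fin.ext hm
  | succ m ih =>
    rw [abs_apply_eq_of_val_add_two hw ⟨m + m, by omega⟩ j (by simp; omega)]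
    exact ih _ rfl

lemma eq_zero_of_apply_eq_zero_of_even (hw : Bmat (cartanC n) σ *ᵥ w = 0) (j : Fin n)
    (hj : Even j.val) (hwj : w j = 0) : w = 0 := by
  funext i
  rcases Nat.even_or_odd i.val with hi | hi
  · rw [Pi.zero_apply, ← abs_eq_zero, abs_apply_eq_of_even hw i hi,
      ← abs_apply_eq_of_even hw j hj, hwj, abs_zero]
  · exact apply_eq_zero_of_odd hw i hi

end BmatCartanCKernel

lemma ite_one_zero_sub_ite_one_zero_eq_zero_iff {P Q : Prop} [Decidable P] [Decidable Q] :
    ((if P then (1 : ℤ) else 0) - if Q then 1 else 0) = 0 ↔ (P ↔ Q) := by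
  split_ifs <;> simp_all

lemma exists_even_mem_Icc_iff_of_mem_Icc_iff_one_three {a b a' b' : ℕ}
    (h₁ : a ≤ 1 ∧ 1 ≤ b ↔ a' ≤ 1 ∧ 1 ≤ b') (h₃ : a ≤ 3 ∧ 3 ≤ b ↔ a' ≤ 3 ∧ 3 ≤ b') :
    ∃ m ≤ 2, (a ≤ 2 * m ∧ 2 * m ≤ b ↔ a' ≤ 2 * m ∧ 2 * m ≤ b') := by
  by_contra! h
  have h₀ := h 0
  have h₂ := h 1
  have h₄ := h 2
  omega

open BmatCartanCKernel in
/-- In type `Cₙ` with `n = 2k+1` odd, `n ≥ 5`, the acyclic exchange matrix `B_σ` is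
injective on the set of positive roots. -/
theorem Bmat_injOn_posRoots_typeC (k : ℕ) (hk : 2 ≤ k)
    (σ : Equiv.Perm (Fin (2 * k + 1))) (α β : Fin (2 * k + 1) → ℤ)
    (hα : IsPosRootC (2 * k + 1) α) (hβ : IsPosRootC (2 * k + 1) β)
    (h : (Bmat (cartanC (2 * k + 1)) σ).mulVec α =
         (Bmat (cartanC (2 * k + 1)) σ).mulVec β) :
    α = β := by
  have hw : Bmat (cartanC (2 * k + 1)) σ *ᵥ (α - β) = 0 := by rw [mulVec_sub, h, sub_self]
  rw [← sub_eq_zero]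
  have hodd (m : ℕ) (hm : 2 * m + 1 < 2 * k + 1) : (α - β) ⟨2 * m + 1, hm⟩ = 0 :=
    apply_eq_zero_of_odd hw _ (odd_two_mul_add_one m)
  rcases hα with ⟨a, b, -, -, rfl⟩ | ⟨a, b, -, hb, rfl⟩ <;>
    rcases hβ with ⟨a', b', -, -, rfl⟩ | ⟨a', b', -, hb', rfl⟩
  · obtain ⟨m, hm, hm_iff⟩ := exists_even_mem_Icc_iff_of_mem_Icc_iff_one_three
      (ite_one_zero_sub_ite_one_zero_eq_zero_iff.mp (hodd 0 (by omega)))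
      (ite_one_zero_sub_ite_one_zero_eq_zero_iff.mp (hodd 1 (by omega)))
    exact eq_zero_of_apply_eq_zero_of_even hw ⟨2 * m, by omega⟩ (even_two_mul m)
      (ite_one_zero_sub_ite_one_zero_eq_zero_iff.mpr hm_iff)
  case inr.inr =>
    exact eq_zero_of_apply_eq_zero_of_even hw ⟨2 * k, by omega⟩ (even_two_mul k) (by simp)
  all_goals
    have := hodd (k - 1) (by omega)
    simp only [Pi.sub_apply] at this
    split_ifs at this <;> omega
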